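/- Let Π be any set of lattice roots of Γ^{2,2} such that every lattice root α satisfies: α or -α is a (finite, nonempty) sum of elements of Π (i.e. lies in the additive submonoid of ℤ⁴ generated by Π). Then there is no ρ ∈ ℤ⁴ with B(ρ,π) = 1 for all π ∈ Π. In other words, no candidate system of fundamental roots of Γ^{2,2} admits a Weyl vector in Γ^{2,2}. -/

import Mathlib

/-- The bilinear form of the even self-dual lattice `Γ^{2,2}`:
`B(x,y) = -(x₁y₂ + x₂y₁) - (x₃y₄ + x₄y₃)`. -/
def GammaB (x y : Fin 4 → ℤ) : ℤ :=
  -(x 0 * y 1 + x 1 * y 0) - (x 2 * y 3 + x 3 * y 2)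

/-- A lattice root of `Γ^{2,2}`: an element `(k,l,m,n)` with `kl + mn = -1`,
equivalently of norm `B(α,α) = 2`. -/
def IsLatticeRoot (α : Fin 4 → ℤ) : Prop :=
  α 0 * α 1 + α 2 * α 3 = -1

/-!
Identify `Γ^{2,2}` with the integer `2 × 2` matrices, so that the norm becomes `det` and `B`
becomes minus its polar form `(X, Y) ↦ trace (adjugate X * Y)`. This form is invariant under
`X ↦ A * X * B` for `A, B ∈ SL(2, ℤ)`, and every integer matrix can be brought to diagonal form
this way. A diagonal matrix is orthogonal to `!![0, 1; 1, 0]`, of determinant `-1`, so every `ρ`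
is orthogonal to some root `α`. A Weyl vector, however, pairs positively with every nonzero sum
of fundamental roots, and `α` or `-α` is such a sum.
-/

open Matrix
open scoped MatrixGroups

theorem Matrix.trace_adjugate_mul_mul_mul {n R : Type*} [Fintype n] [DecidableEq n] [CommRing R]
    (A M B Y : Matrix n n R) :
    ((A * M * B).adjugate * Y).trace = (M.adjugate * (A.adjugate * Y * B.adjugate)).trace := by
  rw [adjugate_mul_distrib, adjugate_mul_distrib, Matrix.mul_assoc, trace_mul_comm]
  simp only [Matrix.mul_assoc]

theorem Matrix.exists_det_eq_trace_adjugate_mul_eq_zero_of_SL_mul_mul {n R : Type*} [Fintype n]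
    [DecidableEq n] [CommRing R] (A B : SpecialLinearGroup n R) (M : Matrix n n R) {u : R}
    (h : ∃ Y : Matrix n n R, Y.det = u ∧ (((A : Matrix n n R) * M * B).adjugate * Y).trace = 0) :
    ∃ Y : Matrix n n R, Y.det = u ∧ (M.adjugate * Y).trace = 0 := by
  obtain ⟨Y, hdet, htr⟩ := h
  refine ⟨(A : Matrix n n R).adjugate * Y * (B : Matrix n n R).adjugate, ?_, ?_⟩
  · simp [det_adjugate, hdet]
  · rwa [← trace_adjugate_mul_mul_mul]

theorem Matrix.exists_SL2_mul_apply_eq_gcd {m : Type*} (M : Matrix (Fin 2) m ℤ) (j : m) :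
    ∃ A : SL(2, ℤ), ((A : Matrix (Fin 2) (Fin 2) ℤ) * M) 0 j = Int.gcd (M 0 j) (M 1 j) ∧
      ((A : Matrix (Fin 2) (Fin 2) ℤ) * M) 1 j = 0 := by
  rcases (Int.gcd (M 0 j) (M 1 j)).eq_zero_or_pos with hg | hg
  · obtain ⟨h0, h1⟩ := Int.gcd_eq_zero_iff.mp hg
    exact ⟨1, by simp [h0, h1], by simp [h1]⟩
  · obtain ⟨g, a, c, -, hac, ha, hc⟩ := Int.exists_gcd_one' hg
    obtain ⟨u, v, huv⟩ := Int.isCoprime_iff_gcd_eq_one.mpr hac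
    have hgcd : Int.gcd (M 0 j) (M 1 j) = g := by
      rw [ha, hc, Int.gcd_mul_right, hac, one_mul, Int.natAbs_natCast]
    refine ⟨⟨!![u, v; -c, a], by rw [det_fin_two_of]; linear_combination huv⟩, ?_, ?_⟩
    · rw [hgcd]
      simp only [mul_apply, Fin.sum_univ_two, of_apply, cons_val', cons_val_zero, cons_val_one,
        cons_val_fin_one, ha, hc]
      linear_combination (g : ℤ) * huv
    · simp only [mul_apply, Fin.sum_univ_two, of_apply, cons_val', cons_val_zero, cons_val_one,
        cons_val_fin_one, ha, hc]
      ring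

theorem Matrix.exists_mul_SL2_apply_eq_gcd {m : Type*} (M : Matrix m (Fin 2) ℤ) (i : m) :
    ∃ B : SL(2, ℤ), (M * (B : Matrix (Fin 2) (Fin 2) ℤ)) i 0 = Int.gcd (M i 0) (M i 1) ∧
      (M * (B : Matrix (Fin 2) (Fin 2) ℤ)) i 1 = 0 := by
  obtain ⟨A, h0, h1⟩ := exists_SL2_mul_apply_eq_gcd Mᵀ i
  refine ⟨A.transpose, ?_, ?_⟩ <;>
    rw [SpecialLinearGroup.coe_transpose, ← transpose_transpose M, ← transpose_mul,
      transpose_apply] <;> assumption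

theorem Matrix.exists_SL2_mul_mul_SL2_eq_diag_of_gcd_ne_zero (M : Matrix (Fin 2) (Fin 2) ℤ)
    (hM : Int.gcd (M 0 0) (M 1 0) ≠ 0) :
    ∃ (A B : SL(2, ℤ)) (a d : ℤ), (A : Matrix (Fin 2) (Fin 2) ℤ) * M * B = !![a, 0; 0, d] := by
  induction hg : Int.gcd (M 0 0) (M 1 0) using Nat.strong_induction_on generalizing M with
  | _ g ih =>
  obtain ⟨A, hA0, hA1⟩ := exists_SL2_mul_apply_eq_gcd M 0
  set U := (A : Matrix (Fin 2) (Fin 2) ℤ) * M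
  rw [hg] at hA0
  by_cases hdvd : U 0 0 ∣ U 0 1
  · obtain ⟨t, ht⟩ := hdvd
    refine ⟨A, ⟨!![1, -t; 0, 1], by simp⟩, U 0 0, U 1 1, ?_⟩
    change U * !![1, -t; 0, 1] = _
    rw [eta_fin_two U, mul_fin_two, hA1, ht]
    simp
  · obtain ⟨B, hB0, -⟩ := exists_mul_SL2_apply_eq_gcd U 0
    set V := U * (B : Matrix (Fin 2) (Fin 2) ℤ)
    have hg0 : g ≠ 0 := hg ▸ hM
    have hU0 : Int.gcd (U 0 0) (U 0 1) ≠ 0 := by simp [Int.gcd_eq_zero_iff, hA0, hg0]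
    have hV0 : Int.gcd (V 0 0) (V 1 0) ≠ 0 := by simp [Int.gcd_eq_zero_iff, hB0, hU0]
    have hUg : Int.gcd (U 0 0) (U 0 1) ∣ g := by
      rw [← Int.natCast_dvd_natCast, ← hA0]; exact Int.gcd_dvd_left _ _
    have hUne : Int.gcd (U 0 0) (U 0 1) ≠ g := by
      intro h; apply hdvd; rw [hA0, ← h]; exact Int.gcd_dvd_right _ _
    have hVU : Int.gcd (V 0 0) (V 1 0) ∣ Int.gcd (U 0 0) (U 0 1) := by
      rw [← Int.natCast_dvd_natCast, ← hB0]; exact Int.gcd_dvd_left _ _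
    have hlt : Int.gcd (V 0 0) (V 1 0) < g :=
      (Nat.le_of_dvd (Nat.pos_of_ne_zero hU0) hVU).trans_lt
        ((Nat.le_of_dvd (Nat.pos_of_ne_zero hg0) hUg).lt_of_ne hUne)
    obtain ⟨A', B', a, d, h⟩ := ih _ hlt V hV0 rfl
    exact ⟨A' * A, B * B', a, d, by simpa [V, U, Matrix.mul_assoc] using h⟩

theorem Matrix.exists_SL2_mul_mul_SL2_eq_diag (M : Matrix (Fin 2) (Fin 2) ℤ) :
    ∃ (A B : SL(2, ℤ)) (a d : ℤ), (A : Matrix (Fin 2) (Fin 2) ℤ) * M * B = !![a, 0; 0, d] := by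
  by_cases hM : Int.gcd (M 0 0) (M 1 0) = 0
  · -- the first column vanishes: clear the second one, then swap the columns
    obtain ⟨h00, h10⟩ := Int.gcd_eq_zero_iff.mp hM
    obtain ⟨A, hA0, hA1⟩ := exists_SL2_mul_apply_eq_gcd M 1
    set U := (A : Matrix (Fin 2) (Fin 2) ℤ) * M
    have hU0 : U 0 0 = 0 := by simp [U, mul_apply, Fin.sum_univ_two, h00, h10]
    have hU1 : U 1 0 = 0 := by simp [U, mul_apply, Fin.sum_univ_two, h00, h10]
    refine ⟨A, ⟨!![0, -1; 1, 0], by simp⟩, Int.gcd (M 0 1) (M 1 1), 0, ?_⟩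
    change U * !![0, -1; 1, 0] = _
    rw [eta_fin_two U, mul_fin_two, hU0, hU1, hA0, hA1]
    simp
  · exact exists_SL2_mul_mul_SL2_eq_diag_of_gcd_ne_zero M hM

theorem Matrix.exists_det_eq_neg_one_trace_adjugate_mul_eq_zero (M : Matrix (Fin 2) (Fin 2) ℤ) :
    ∃ Y : Matrix (Fin 2) (Fin 2) ℤ, Y.det = -1 ∧ (M.adjugate * Y).trace = 0 := by
  obtain ⟨A, B, a, d, hD⟩ := exists_SL2_mul_mul_SL2_eq_diag M
  refine exists_det_eq_trace_adjugate_mul_eq_zero_of_SL_mul_mul A B M ⟨!![0, 1; 1, 0], ?_, ?_⟩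
  · simp
  · simp [hD, adjugate_fin_two, trace_fin_two]

/-- Under `x ↦ !![x 0, x 2; -x 3, x 1]` the norm `x 0 * x 1 + x 2 * x 3` becomes `det` and
`GammaB` becomes minus the polar form `trace (adjugate X * Y)` of `det`. -/
theorem exists_isLatticeRoot_gammaB_eq_zero (ρ : Fin 4 → ℤ) :
    ∃ α, IsLatticeRoot α ∧ GammaB ρ α = 0 := by
  obtain ⟨Y, hdet, htr⟩ := exists_det_eq_neg_one_trace_adjugate_mul_eq_zero !![ρ 0, ρ 2; -ρ 3, ρ 1]
  refine ⟨![Y 0 0, Y 1 1, Y 0 1, -Y 1 0], ?_, ?_⟩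
  · rw [det_fin_two] at hdet
    show Y 0 0 * Y 1 1 + Y 0 1 * -Y 1 0 = -1
    linear_combination hdet
  · rw [adjugate_fin_two_of, eta_fin_two Y, mul_fin_two, trace_fin_two_of] at htr
    show -(ρ 0 * Y 1 1 + ρ 1 * Y 0 0) - (ρ 2 * -Y 1 0 + ρ 3 * Y 0 1) = 0
    linear_combination -htr

theorem AddSubmonoid.eq_zero_of_mem_closure_of_map_eq_zero {M N : Type*} [AddMonoid M]
    [AddCommMonoid N] [PartialOrder N] [IsOrderedCancelAddMonoid N] {S : Set M} (f : M →+ N)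
    (hS : ∀ s ∈ S, 0 < f s) {x : M} (hx : x ∈ closure S) (hfx : f x = 0) : x = 0 := by
  refine (?_ : x = 0 ∨ 0 < f x).resolve_right hfx.not_gt
  clear hfx
  induction hx using closure_induction with
  | mem s hs => exact .inr (hS s hs)
  | zero => exact .inl rfl
  | add y z _ _ hy hz =>
    rcases hy with rfl | hy
    · simpa using hz
    rcases hz with rfl | hz
    · simpa using Or.inr hy
    exact .inr (by rw [map_add]; exact add_pos hy hz)

theorem gammaB_add (ρ x y : Fin 4 → ℤ) : GammaB ρ (x + y) = GammaB ρ x + GammaB ρ y := by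
  simp only [GammaB, Pi.add_apply]; ring

theorem no_weyl_vector_for_fundamental_roots_general (Pi : Set (Fin 4 → ℤ))
    (hgen : ∀ α : Fin 4 → ℤ, IsLatticeRoot α →
      α ∈ AddSubmonoid.closure Pi ∨ -α ∈ AddSubmonoid.closure Pi) :
    ¬ ∃ ρ : Fin 4 → ℤ, ∀ π ∈ Pi, GammaB ρ π = 1 := by
  rintro ⟨ρ, hρ⟩
  obtain ⟨α, hα, hρα⟩ := exists_isLatticeRoot_gammaB_eq_zero ρ
  have hα0 : α ≠ 0 := by rintro rfl; simp [IsLatticeRoot] at hα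
  let f : (Fin 4 → ℤ) →+ ℤ := AddMonoidHom.mk' (GammaB ρ) (gammaB_add ρ)
  have hf : ∀ π ∈ Pi, 0 < f π := fun π hπ => by simp [f, hρ π hπ]
  rcases hgen α hα with h | h
  · exact hα0 (AddSubmonoid.eq_zero_of_mem_closure_of_map_eq_zero f hf h hρα)
  · refine hα0 (neg_eq_zero.mp (AddSubmonoid.eq_zero_of_mem_closure_of_map_eq_zero f hf h ?_))
    rw [map_neg, neg_eq_zero]
    exact hρα

/-- No candidate system `Pi` of fundamental roots of `Γ^{2,2}` (a set of
lattice roots such that every lattice root, or its negative, is a sum of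
elements of `Pi`) admits a Weyl vector, i.e. a `ρ ∈ ℤ⁴` with `B(ρ,π) = 1`
for all `π ∈ Pi`. -/
theorem no_weyl_vector_for_fundamental_roots (Pi : Set (Fin 4 → ℤ))
    (hroots : ∀ π ∈ Pi, IsLatticeRoot π)
    (hgen : ∀ α : Fin 4 → ℤ, IsLatticeRoot α →
      α ∈ AddSubmonoid.closure Pi ∨ -α ∈ AddSubmonoid.closure Pi) :
    ¬ ∃ ρ : Fin 4 → ℤ, ∀ π ∈ Pi, GammaB ρ π = 1 :=
  no_weyl_vector_for_fundamental_roots_general Pi hgen
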